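/- Let K ≥ 2 and r : Fin K → PMF (Bool × Bool), and for i : Bool define L(i) and U(i) as in the context. Let π₀, π₁ : ℝ satisfy L(false) ≤ π₀ ≤ U(false) and L(true) ≤ π₁ ≤ U(true). Then there exists q : PMF (Bool × Bool) with q {p | p.1 = true} = π₀ and q {p | p.2 = true} = π₁ such that for every z : Fin K the pair (q, r z) satisfies the IV inequalities. -/

import Mathlib

/-- The probability (as a real number) that a PMF assigns to a set. -/
noncomputable def pr {α : Type*} (p : PMF α) (s : Set α) : ℝ := (p.toOuterMeasure s).toReal

/-- `(q, r)` satisfies the IV inequalities (marg) and (joint), where `q` is a putative joint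
law of the potential outcomes `(Y(x₀), Y(x₁))` and `r` a putative law of `(X, Y)` given
`Z = z`. -/
def SatisfiesIV (q r : PMF (Bool × Bool)) : Prop :=
  (∀ i y : Bool,
    pr q {p | (if i then p.2 else p.1) = y} ≤ pr r {(i, y)} + pr r {p | p.1 = !i}) ∧
  (∀ y y' : Bool, pr q {(y, y')} ≤ pr r {(false, y)} + pr r {(true, y')})

lemma univ_nonempty_of_two_le {K : ℕ} (hK : 2 ≤ K) :
    (Finset.univ : Finset (Fin K)).Nonempty :=
  ⟨⟨0, by omega⟩, Finset.mem_univ _⟩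

lemma offDiag_nonempty_of_two_le {K : ℕ} (hK : 2 ≤ K) :
    ((Finset.univ : Finset (Fin K)).offDiag).Nonempty :=
  ⟨(⟨0, by omega⟩, ⟨1, by omega⟩),
    Finset.mem_offDiag.mpr ⟨Finset.mem_univ _, Finset.mem_univ _, by simp [Fin.ext_iff]⟩⟩

/-- The sharp lower bound `L(i)` on `π_i = P(Y(x_i) = 1)`: the maximum of
`r z {(i, 1)}` over `z` and of `r z̃ {y = 1} − r z {(¬i, 1)} − r z {(i, 0)}`
over ordered pairs `z ≠ z̃`. -/
noncomputable def Lbd {K : ℕ} (hK : 2 ≤ K) (r : Fin K → PMF (Bool × Bool)) (i : Bool) : ℝ :=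
  max
    (Finset.univ.sup' (univ_nonempty_of_two_le hK) fun z => pr (r z) {(i, true)})
    (Finset.univ.offDiag.sup' (offDiag_nonempty_of_two_le hK) fun zz =>
      pr (r zz.2) {p | p.2 = true} - pr (r zz.1) {(!i, true)} - pr (r zz.1) {(i, false)})

/-- The sharp upper bound `U(i)` on `π_i = P(Y(x_i) = 1)`: the minimum of
`1 − r z {(i, 0)}` over `z` and of `r z̃ {y = 1} + r z {(i, 1)} + r z {(¬i, 0)}`
over ordered pairs `z ≠ z̃`. -/
noncomputable def Ubd {K : ℕ} (hK : 2 ≤ K) (r : Fin K → PMF (Bool × Bool)) (i : Bool) : ℝ :=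
  min
    (Finset.univ.inf' (univ_nonempty_of_two_le hK) fun z => 1 - pr (r z) {(i, false)})
    (Finset.univ.offDiag.inf' (offDiag_nonempty_of_two_le hK) fun zz =>
      pr (r zz.2) {p | p.2 = true} + pr (r zz.1) {(i, true)} + pr (r zz.1) {(!i, false)})

lemma pr_fin (p : PMF (Bool × Bool)) (s : Set (Bool × Bool)) [DecidablePred (· ∈ s)] :
    pr p s = ∑ x : Bool × Bool, if x ∈ s then (p x).toReal else 0 := by
  rw [pr, PMF.toOuterMeasure_apply, tsum_fintype, ENNReal.toReal_sum]
  · refine Finset.sum_congr rfl fun x _ => ?_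
    by_cases hx : x ∈ s <;> simp [Set.indicator, hx]
  · intro x _
    by_cases hx : x ∈ s <;> simp [Set.indicator, hx, PMF.apply_ne_top]

lemma pr_singleton (p : PMF (Bool × Bool)) (x : Bool × Bool) :
    pr p {x} = (p x).toReal := by
  rw [pr_fin]; simp [Set.mem_singleton_iff]

lemma pr_fst (p : PMF (Bool × Bool)) (b : Bool) :
    pr p {x | x.1 = b} = (p (b, false)).toReal + (p (b, true)).toReal := by
  rw [pr_fin]
  rcases b <;> simp [Fintype.sum_prod_type, Fintype.sum_bool] <;> ring

lemma pr_snd (p : PMF (Bool × Bool)) (b : Bool) :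
    pr p {x | x.2 = b} = (p (false, b)).toReal + (p (true, b)).toReal := by
  rw [pr_fin]
  rcases b <;> simp [Fintype.sum_prod_type, Fintype.sum_bool] <;> ring

lemma pr_total (p : PMF (Bool × Bool)) :
    (p (false, false)).toReal + (p (false, true)).toReal + (p (true, false)).toReal
      + (p (true, true)).toReal = 1 := by
  have h : ∑ x : Bool × Bool, p x = 1 := by rw [← tsum_fintype (L := SummationFilter.unconditional _)]; exact p.tsum_coe
  have h2 := congrArg ENNReal.toReal h
  rw [ENNReal.toReal_sum (fun x _ => PMF.apply_ne_top p x)] at h2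
  simp [Fintype.sum_prod_type, Fintype.sum_bool] at h2
  linarith

noncomputable def mkq (w : Bool × Bool → ℝ) (hw : ∀ x, 0 ≤ w x)
    (hsum : ∑ x : Bool × Bool, w x = 1) : PMF (Bool × Bool) :=
  PMF.ofFintype (fun x => ENNReal.ofReal (w x)) (by
    rw [← ENNReal.ofReal_sum_of_nonneg (fun x _ => hw x), hsum, ENNReal.ofReal_one])

lemma mkq_apply (w : Bool × Bool → ℝ) (hw : ∀ x, 0 ≤ w x)
    (hsum : ∑ x : Bool × Bool, w x = 1) (x : Bool × Bool) :
    ((mkq w hw hsum) x).toReal = w x := by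
  rw [mkq, PMF.ofFintype_apply, ENNReal.toReal_ofReal (hw x)]

noncomputable def wfun (a π₀ π₁ : ℝ) : Bool × Bool → ℝ
  | (true, true) => a
  | (true, false) => π₀ - a
  | (false, true) => π₁ - a
  | (false, false) => 1 - π₀ - π₁ + a

lemma key {K : ℕ} (hK : 2 ≤ K) (A B C D : Fin K → ℝ) (π₀ π₁ : ℝ)
    (hAnn : ∀ z, 0 ≤ A z) (hBnn : ∀ z, 0 ≤ B z) (hCnn : ∀ z, 0 ≤ C z) (hDnn : ∀ z, 0 ≤ D z)
    (htot : ∀ z, A z + B z + C z + D z = 1)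
    (h0l1 : ∀ z, A z ≤ π₀)
    (h0l2 : ∀ z z', z ≠ z' → A z' + C z' - C z - B z ≤ π₀)
    (h0u1 : ∀ z, π₀ ≤ 1 - B z)
    (h0u2 : ∀ z z', z ≠ z' → π₀ ≤ A z' + C z' + A z + D z)
    (h1l1 : ∀ z, C z ≤ π₁)
    (h1l2 : ∀ z z', z ≠ z' → A z' + C z' - A z - D z ≤ π₁)
    (h1u1 : ∀ z, π₁ ≤ 1 - D z)
    (h1u2 : ∀ z z', z ≠ z' → π₁ ≤ A z' + C z' + C z + B z) :
    ∃ a : ℝ, 0 ≤ a ∧ a ≤ π₀ ∧ a ≤ π₁ ∧ π₀ + π₁ - 1 ≤ a ∧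
      (∀ z, a ≤ A z + C z) ∧ (∀ z, π₀ - a ≤ A z + D z) ∧
      (∀ z, π₁ - a ≤ B z + C z) ∧ (∀ z, 1 - π₀ - π₁ + a ≤ B z + D z) := by
  have z0 : Fin K := ⟨0, by omega⟩
  have hne := univ_nonempty_of_two_le hK
  set lb := Finset.univ.sup' hne
      (fun z => max (π₀ - (A z + D z)) (π₁ - (B z + C z))) with hlb
  have hsup : ∀ z : Fin K, max (π₀ - (A z + D z)) (π₁ - (B z + C z)) ≤ lb := fun z =>
    Finset.le_sup' (fun z => max (π₀ - (A z + D z)) (π₁ - (B z + C z))) (Finset.mem_univ z)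
  have hlb3 : ∀ z : Fin K, π₀ - (A z + D z) ≤ lb := fun z =>
    le_trans (le_max_left _ _) (hsup z)
  have hlb4 : ∀ z : Fin K, π₁ - (B z + C z) ≤ lb := fun z =>
    le_trans (le_max_right _ _) (hsup z)
  have hπ₀1 : π₀ ≤ 1 := le_trans (h0u1 z0) (by linarith [hBnn z0])
  have hπ₁1 : π₁ ≤ 1 := le_trans (h1u1 z0) (by linarith [hDnn z0])
  have hπ₀0 : 0 ≤ π₀ := le_trans (hAnn z0) (h0l1 z0)
  have hπ₁0 : 0 ≤ π₁ := le_trans (hCnn z0) (h1l1 z0)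
  refine ⟨max (max 0 (π₀ + π₁ - 1)) lb, le_trans (le_max_left 0 _) (le_max_left _ _),
    ?_, ?_, le_trans (le_max_right 0 _) (le_max_left _ _), ?_, ?_, ?_, ?_⟩
  · -- a ≤ π₀
    refine max_le (max_le hπ₀0 (by linarith)) (Finset.sup'_le _ _ fun z _ => max_le ?_ ?_)
    · linarith [hAnn z, hDnn z]
    · linarith [h1u1 z, htot z, h0l1 z]
  · -- a ≤ π₁
    refine max_le (max_le hπ₁0 (by linarith)) (Finset.sup'_le _ _ fun z _ => max_le ?_ ?_)
    · linarith [h0u1 z, htot z, h1l1 z]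
    · linarith [hBnn z, hCnn z]
  · -- ∀ z', a ≤ A z' + C z'
    intro z'
    refine max_le (max_le (by linarith [hAnn z', hCnn z'])
      (by linarith [h0u1 z', h1u1 z', htot z']))
      (Finset.sup'_le _ _ fun z _ => max_le ?_ ?_)
    · by_cases hzz : z = z'
      · subst hzz; linarith [h0u1 z, htot z, hAnn z]
      · linarith [h0u2 z z' hzz]
    · by_cases hzz : z = z'
      · subst hzz; linarith [h1u1 z, htot z, hCnn z]
      · linarith [h1u2 z z' hzz]
  · -- ∀ z, π₀ - a ≤ A z + D z
    intro z
    have := hlb3 z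
    have h2 : lb ≤ max (max 0 (π₀ + π₁ - 1)) lb := le_max_right _ _
    linarith
  · -- ∀ z, π₁ - a ≤ B z + C z
    intro z
    have := hlb4 z
    have h2 : lb ≤ max (max 0 (π₀ + π₁ - 1)) lb := le_max_right _ _
    linarith
  · -- ∀ z', 1 - π₀ - π₁ + a ≤ B z' + D z'   i.e.  a ≤ π₀ + π₁ - 1 + B z' + D z'
    intro z'
    have h : max (max 0 (π₀ + π₁ - 1)) lb ≤ π₀ + π₁ - 1 + (B z' + D z') := by
      refine max_le (max_le ?_ (by linarith [hBnn z', hDnn z']))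
        (Finset.sup'_le _ _ fun z _ => max_le ?_ ?_)
      · linarith [h0l1 z', h1l1 z', htot z']
      · by_cases hzz : z = z'
        · subst hzz; linarith [h1l1 z, htot z, hDnn z]
        · linarith [h1l2 z z' hzz, htot z']
      · by_cases hzz : z = z'
        · subst hzz; linarith [h0l1 z, htot z, hBnn z]
        · linarith [h0l2 z z' hzz, htot z']
    linarith

/-- The variation-independence claim of Theorem 2: the set of feasible pairs
`(π₀, π₁) = (P(Y(x₀) = 1), P(Y(x₁) = 1))` compatible with the IV inequalities is exactly
the product of intervals `[L(0), U(0)] × [L(1), U(1)]`. -/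
theorem iv_variation_independence
    {K : ℕ} (hK : 2 ≤ K) (r : Fin K → PMF (Bool × Bool))
    (π₀ π₁ : ℝ)
    (h₀l : Lbd hK r false ≤ π₀) (h₀u : π₀ ≤ Ubd hK r false)
    (h₁l : Lbd hK r true ≤ π₁) (h₁u : π₁ ≤ Ubd hK r true) :
    ∃ q : PMF (Bool × Bool),
      pr q {p | p.1 = true} = π₀ ∧
      pr q {p | p.2 = true} = π₁ ∧
      ∀ z : Fin K, SatisfiesIV q (r z) := by
  unfold Lbd at h₀l h₁l
  unfold Ubd at h₀u h₁u
  obtain ⟨h₀l1, h₀l2⟩ := max_le_iff.mp h₀l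
  obtain ⟨h₁l1, h₁l2⟩ := max_le_iff.mp h₁l
  obtain ⟨h₀u1, h₀u2⟩ := le_min_iff.mp h₀u
  obtain ⟨h₁u1, h₁u2⟩ := le_min_iff.mp h₁u
  have hmemOD : ∀ z z' : Fin K, z ≠ z' →
      (z, z') ∈ (Finset.univ : Finset (Fin K)).offDiag := fun z z' hzz =>
    Finset.mem_offDiag.mpr ⟨Finset.mem_univ _, Finset.mem_univ _, hzz⟩
  -- per-z consequences
  have h0l1' : ∀ z, ((r z) (false, true)).toReal ≤ π₀ := fun z => by
    have h := (Finset.le_sup' (fun z => pr (r z) {((false : Bool), true)})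
      (Finset.mem_univ z)).trans h₀l1
    rwa [pr_singleton] at h
  have h1l1' : ∀ z, ((r z) (true, true)).toReal ≤ π₁ := fun z => by
    have h := (Finset.le_sup' (fun z => pr (r z) {((true : Bool), true)})
      (Finset.mem_univ z)).trans h₁l1
    rwa [pr_singleton] at h
  have h0u1' : ∀ z, π₀ ≤ 1 - ((r z) (false, false)).toReal := fun z => by
    have h := h₀u1.trans (Finset.inf'_le (fun z => 1 - pr (r z) {((false : Bool), false)})
      (Finset.mem_univ z))
    rwa [pr_singleton] at h
  have h1u1' : ∀ z, π₁ ≤ 1 - ((r z) (true, false)).toReal := fun z => by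
    have h := h₁u1.trans (Finset.inf'_le (fun z => 1 - pr (r z) {((true : Bool), false)})
      (Finset.mem_univ z))
    rwa [pr_singleton] at h
  have h0l2' : ∀ z z', z ≠ z' →
      ((r z') (false, true)).toReal + ((r z') (true, true)).toReal
        - ((r z) (true, true)).toReal - ((r z) (false, false)).toReal ≤ π₀ := by
    intro z z' hzz
    have h := (Finset.le_sup' (fun zz : Fin K × Fin K =>
      pr (r zz.2) {p | p.2 = true} - pr (r zz.1) {(!false, true)}
        - pr (r zz.1) {(false, false)}) (hmemOD z z' hzz)).trans h₀l2
    simp only [Bool.not_false, pr_snd, pr_singleton] at h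
    linarith
  have h1l2' : ∀ z z', z ≠ z' →
      ((r z') (false, true)).toReal + ((r z') (true, true)).toReal
        - ((r z) (false, true)).toReal - ((r z) (true, false)).toReal ≤ π₁ := by
    intro z z' hzz
    have h := (Finset.le_sup' (fun zz : Fin K × Fin K =>
      pr (r zz.2) {p | p.2 = true} - pr (r zz.1) {(!true, true)}
        - pr (r zz.1) {(true, false)}) (hmemOD z z' hzz)).trans h₁l2
    simp only [Bool.not_true, pr_snd, pr_singleton] at h
    linarith
  have h0u2' : ∀ z z', z ≠ z' →
      π₀ ≤ ((r z') (false, true)).toReal + ((r z') (true, true)).toReal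
        + ((r z) (false, true)).toReal + ((r z) (true, false)).toReal := by
    intro z z' hzz
    have h := h₀u2.trans (Finset.inf'_le (fun zz : Fin K × Fin K =>
      pr (r zz.2) {p | p.2 = true} + pr (r zz.1) {(false, true)}
        + pr (r zz.1) {(!false, false)}) (hmemOD z z' hzz))
    simp only [Bool.not_false, pr_snd, pr_singleton] at h
    linarith
  have h1u2' : ∀ z z', z ≠ z' →
      π₁ ≤ ((r z') (false, true)).toReal + ((r z') (true, true)).toReal
        + ((r z) (true, true)).toReal + ((r z) (false, false)).toReal := by
    intro z z' hzz
    have h := h₁u2.trans (Finset.inf'_le (fun zz : Fin K × Fin K =>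
      pr (r zz.2) {p | p.2 = true} + pr (r zz.1) {(true, true)}
        + pr (r zz.1) {(!true, false)}) (hmemOD z z' hzz))
    simp only [Bool.not_true, pr_snd, pr_singleton] at h
    linarith
  obtain ⟨a, ha0, haπ₀, haπ₁, had, hub3, hlb3, hlb4, hub4⟩ :=
    key hK (fun z => ((r z) (false, true)).toReal) (fun z => ((r z) (false, false)).toReal)
      (fun z => ((r z) (true, true)).toReal) (fun z => ((r z) (true, false)).toReal) π₀ π₁
      (fun z => ENNReal.toReal_nonneg) (fun z => ENNReal.toReal_nonneg)
      (fun z => ENNReal.toReal_nonneg) (fun z => ENNReal.toReal_nonneg)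
      (fun z => by have := pr_total (r z); linarith)
      h0l1' (fun z z' h => by have := h0l2' z z' h; linarith)
      (fun z => by have := h0u1' z; linarith)
      (fun z z' h => by have := h0u2' z z' h; linarith)
      h1l1' (fun z z' h => by have := h1l2' z z' h; linarith)
      (fun z => by have := h1u1' z; linarith)
      (fun z z' h => by have := h1u2' z z' h; linarith)
  have hw : ∀ x, 0 ≤ wfun a π₀ π₁ x := by
    rintro ⟨(_ | _), (_ | _)⟩ <;> simp only [wfun] <;> linarith
  have hsum : ∑ x : Bool × Bool, wfun a π₀ π₁ x = 1 := by
    simp only [Fintype.sum_prod_type, Fintype.sum_bool, wfun]; ring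
  refine ⟨mkq _ hw hsum, ?_, ?_, ?_⟩
  · rw [pr_fst, mkq_apply, mkq_apply]
    show π₀ - a + a = π₀
    ring
  · rw [pr_snd, mkq_apply, mkq_apply]
    show π₁ - a + a = π₁
    ring
  · intro z
    constructor
    · intro i y
      cases i <;> cases y
      · show pr (mkq _ hw hsum) {p : Bool × Bool | p.1 = false} ≤
          pr (r z) {((false : Bool), false)} + pr (r z) {p : Bool × Bool | p.1 = true}
        rw [pr_fst, pr_fst, pr_singleton, mkq_apply, mkq_apply]
        have h1 : wfun a π₀ π₁ (false, false) = 1 - π₀ - π₁ + a := rfl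
        have h2 : wfun a π₀ π₁ (false, true) = π₁ - a := rfl
        rw [h1, h2]
        linarith [h0l1' z, pr_total (r z)]
      · show pr (mkq _ hw hsum) {p : Bool × Bool | p.1 = true} ≤
          pr (r z) {((false : Bool), true)} + pr (r z) {p : Bool × Bool | p.1 = true}
        rw [pr_fst, pr_fst, pr_singleton, mkq_apply, mkq_apply]
        have h1 : wfun a π₀ π₁ (true, false) = π₀ - a := rfl
        have h2 : wfun a π₀ π₁ (true, true) = a := rfl
        rw [h1, h2]
        linarith [h0u1' z, pr_total (r z)]
      · show pr (mkq _ hw hsum) {p : Bool × Bool | p.2 = false} ≤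
          pr (r z) {((true : Bool), false)} + pr (r z) {p : Bool × Bool | p.1 = false}
        rw [pr_snd, pr_fst, pr_singleton, mkq_apply, mkq_apply]
        have h1 : wfun a π₀ π₁ (false, false) = 1 - π₀ - π₁ + a := rfl
        have h2 : wfun a π₀ π₁ (true, false) = π₀ - a := rfl
        rw [h1, h2]
        linarith [h1l1' z, pr_total (r z)]
      · show pr (mkq _ hw hsum) {p : Bool × Bool | p.2 = true} ≤
          pr (r z) {((true : Bool), true)} + pr (r z) {p : Bool × Bool | p.1 = false}
        rw [pr_snd, pr_fst, pr_singleton, mkq_apply, mkq_apply]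
        have h1 : wfun a π₀ π₁ (false, true) = π₁ - a := rfl
        have h2 : wfun a π₀ π₁ (true, true) = a := rfl
        rw [h1, h2]
        linarith [h1u1' z, pr_total (r z)]
    · intro y y'
      cases y <;> cases y' <;>
        rw [pr_singleton, pr_singleton, pr_singleton, mkq_apply]
      · show 1 - π₀ - π₁ + a ≤ _
        linarith [hub4 z]
      · show π₁ - a ≤ _
        linarith [hlb4 z]
      · show π₀ - a ≤ _
        linarith [hlb3 z]
      · show a ≤ _
        linarith [hub3 z]
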